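/- arXiv:2412.15087 — 2 statements merged into one kernel-verified Lean document; each statement's English description precedes it below -/
import Mathlib

section
/- Assume in addition that the map (s,x) ↦ T_s x is continuous on [0,∞) × X. Then for every nonempty compact K ⊆ X and every t₀ > 0, g(K) = sup_{ε>0} limsup_{t→∞} (1/t) log g_{t₀,t}(ε,K); that is, the topological entropy of K can be computed using the truncated dynamical balls B_{t₀}(·,t,ε) in place of B(·,t,ε). -/
/-!
Since `B(x,t,ε) ⊆ B_{t₀}(x,t,ε)`, truncated covers are cheaper and one inequality is immediate.
Conversely, continuity of the flow on the compact `[0,t₀]` makes each `B(x,t₀,ε/2)` a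
neighbourhood of `x`, so finitely many, say `N`, of them cover `K`. Each intersection of one of
these with a truncated ball `B_{t₀}(e,t,ε/2)` lies in a single ball `B(z,t,ε)`, hence
`g_t(ε,K) ≤ N · g_{t₀,t}(ε/2,K)`, and the constant factor `N` is invisible in the growth rate.
-/

open Filter Set
open scoped Topology
open scoped ENNReal NNReal

variable {X : Type*} [MetricSpace X]

/-- The dynamical ball `B(x,t,ε)`. -/
def dynBall (T : ℝ → X → X) (x : X) (t ε : ℝ) : Set X :=
  {y | ∀ s ∈ Set.Icc 0 t, dist (T s y) (T s x) < ε}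

/-- The truncated dynamical ball `B_{t₀}(x,t,ε)`. -/
def truncBall (T : ℝ → X → X) (t₀ : ℝ) (x : X) (t ε : ℝ) : Set X :=
  {y | ∀ s ∈ Set.Icc t₀ t, dist (T s x) (T s y) < ε}

/-- `g_t(ε,K)`: minimal cardinality of a `(t,ε)`-generating set for `K`. -/
noncomputable def genCount (T : ℝ → X → X) (t ε : ℝ) (K : Set X) : ℕ∞ :=
  sInf {n : ℕ∞ | ∃ E : Set X, E.encard = n ∧ K ⊆ ⋃ x ∈ E, dynBall T x t ε}

/-- `g_{t₀,t}(ε,K)`: minimal cardinality of a cover of `K` by truncated dynamical balls. -/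
noncomputable def truncCount (T : ℝ → X → X) (t₀ t ε : ℝ) (K : Set X) : ℕ∞ :=
  sInf {n : ℕ∞ | ∃ E : Set X, E.encard = n ∧ K ⊆ ⋃ x ∈ E, truncBall T t₀ x t ε}

/-- `g(K) = sup_{ε>0} limsup_{t→∞} (1/t) log g_t(ε,K)`. -/
noncomputable def entg (T : ℝ → X → X) (K : Set X) : EReal :=
  ⨆ (ε : ℝ) (_ : 0 < ε),
    Filter.limsup (fun t : ℝ => ((t⁻¹ : ℝ) : EReal) * ENNReal.log ((genCount T t ε K : ℝ≥0∞)))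
      Filter.atTop

/-- Topological entropy `h_top(T) = sup { g(K) : K nonempty compact }`. -/
noncomputable def htop (T : ℝ → X → X) : EReal :=
  ⨆ (K : Set X) (_ : IsCompact K) (_ : K.Nonempty), entg T K

noncomputable def growthRate (f : ℝ → ℝ≥0∞) : EReal :=
  limsup (fun t : ℝ => ((t⁻¹ : ℝ) : EReal) * ENNReal.log (f t)) atTop

lemma growthRate_mono_of_eventually_le {f g : ℝ → ℝ≥0∞} (hfg : ∀ᶠ t in atTop, f t ≤ g t) :
    growthRate f ≤ growthRate g := by
  refine limsup_le_limsup ?_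
  filter_upwards [hfg, eventually_ge_atTop 0] with t hle ht
  exact mul_le_mul_of_nonneg_left (ENNReal.log_monotone hle) (by exact_mod_cast inv_nonneg.2 ht)

lemma growthRate_const_mul_le {C : ℝ≥0∞} (hC : C ≠ ⊤) (f : ℝ → ℝ≥0∞) :
    growthRate (fun t => C * f t) ≤ growthRate f := by
  -- `max C 1` has a finite logarithm even when `C = 0`.
  set r : ℝ := (ENNReal.log (max C 1)).toReal
  have hr : (r : EReal) = ENNReal.log (max C 1) :=
    EReal.coe_toReal (by simp [hC]) (by simp)
  have hdecay : Tendsto (fun t : ℝ => ((t⁻¹ : ℝ) : EReal) * r) atTop (𝓝 0) := by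
    simpa [← EReal.coe_mul] using
      (EReal.tendsto_coe.2 (tendsto_inv_atTop_zero.mul_const r) : Tendsto _ atTop (𝓝 _))
  have hsplit : ∀ᶠ t in atTop, ((t⁻¹ : ℝ) : EReal) * ENNReal.log (C * f t) ≤
      ((t⁻¹ : ℝ) : EReal) * r + ((t⁻¹ : ℝ) : EReal) * ENNReal.log (f t) := by
    filter_upwards [eventually_ge_atTop 0] with t ht
    have ht' : (0 : EReal) ≤ ((t⁻¹ : ℝ) : EReal) := by exact_mod_cast inv_nonneg.2 ht
    rw [← EReal.left_distrib_of_nonneg_of_ne_top ht' (EReal.coe_ne_top _), hr,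
      ← ENNReal.log_mul_add]
    exact mul_le_mul_of_nonneg_left
      (ENNReal.log_monotone (mul_le_mul_left (le_max_left C 1) _)) ht'
  calc growthRate (fun t => C * f t)
      ≤ limsup ((fun t : ℝ => ((t⁻¹ : ℝ) : EReal) * r) +
          fun t : ℝ => ((t⁻¹ : ℝ) : EReal) * ENNReal.log (f t)) atTop :=
        limsup_le_limsup hsplit
    _ ≤ 0 + growthRate f := by
        rw [← hdecay.limsup_eq]
        exact EReal.limsup_add_le (.inl (by simp [hdecay.limsup_eq]))
          (.inl (by simp [hdecay.limsup_eq]))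
    _ = growthRate f := zero_add _

section Covering

variable (T : ℝ → X → X)

lemma dynBall_mem_nhds
    (hT : ContinuousOn (fun p : ℝ × X => T p.1 p.2) (Set.Ici 0 ×ˢ Set.univ))
    (x : X) {t ε : ℝ} (hε : 0 < ε) : dynBall T x t ε ∈ 𝓝 x := by
  -- `s ↦ max s 0` extends the flow continuously to negative times.
  have hT' : Continuous fun p : X × ℝ => T (max p.2 0) p.1 :=
    continuousOn_univ.1 <| hT.comp
      (Continuous.continuousOn (by fun_prop : Continuous fun p : X × ℝ => (max p.2 0, p.1)))
      fun p _ => ⟨mem_Ici.2 (le_max_right _ _), trivial⟩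
  have hnear : ∀ᶠ z in 𝓝 x, ∀ s ∈ Icc (0 : ℝ) t, dist (T (max s 0) z) (T (max s 0) x) < ε :=
    isCompact_Icc.eventually_forall_of_forall_eventually fun s _ =>
      ((hT'.dist (hT'.comp (by fun_prop : Continuous fun p : X × ℝ => (x, p.2)))).continuousAt
        (x := (x, s))).eventually_lt continuousAt_const (by simpa using hε)
  filter_upwards [hnear] with z hz s hs
  simpa [max_eq_left hs.1] using hz s hs

lemma dynBall_subset_truncBall {t₀ : ℝ} (ht₀ : 0 ≤ t₀) (x : X) (t ε : ℝ) :
    dynBall T x t ε ⊆ truncBall T t₀ x t ε := fun _ hy s hs => by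
  simpa only [dist_comm] using hy s (⟨ht₀.trans hs.1, hs.2⟩ : s ∈ Icc 0 t)

lemma truncCount_le_genCount {t₀ : ℝ} (ht₀ : 0 ≤ t₀) (t ε : ℝ) (K : Set X) :
    truncCount T t₀ t ε K ≤ genCount T t ε K :=
  sInf_le_sInf fun _ ⟨E, hE, hcov⟩ =>
    ⟨E, hE, hcov.trans (iUnion₂_mono fun x _ => dynBall_subset_truncBall T ht₀ x t ε)⟩

lemma genCount_le_encard {t ε : ℝ} {K E : Set X} (hE : K ⊆ ⋃ x ∈ E, dynBall T x t ε) :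
    genCount T t ε K ≤ E.encard :=
  sInf_le ⟨E, rfl, hE⟩

lemma exists_encard_eq_truncCount (t₀ t : ℝ) {ε : ℝ} (hε : 0 < ε) (K : Set X) :
    ∃ E : Set X, E.encard = truncCount T t₀ t ε K ∧ K ⊆ ⋃ x ∈ E, truncBall T t₀ x t ε :=
  csInf_mem (s := {n : ℕ∞ | ∃ E : Set X, E.encard = n ∧ K ⊆ ⋃ x ∈ E, truncBall T t₀ x t ε})
    ⟨K.encard, K, rfl, fun y hy => mem_biUnion hy fun s _ => by simpa using hε⟩

lemma mem_dynBall_of_mem_dynBall_inter_truncBall {t₀ t ε : ℝ} {f e y z : X}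
    (hy : y ∈ dynBall T f t₀ ε ∩ truncBall T t₀ e t ε)
    (hz : z ∈ dynBall T f t₀ ε ∩ truncBall T t₀ e t ε) :
    y ∈ dynBall T z t (2 * ε) := by
  intro s hs
  rcases le_or_gt s t₀ with hs₀ | hs₀
  · have hyf := hy.1 s ⟨hs.1, hs₀⟩
    have hzf := hz.1 s ⟨hs.1, hs₀⟩
    linarith [dist_triangle_right (T s y) (T s z) (T s f)]
  · have hey := hy.2 s ⟨hs₀.le, hs.2⟩
    have hez := hz.2 s ⟨hs₀.le, hs.2⟩
    linarith [dist_triangle_left (T s y) (T s z) (T s e)]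

lemma genCount_two_mul_le_encard_mul_truncCount {t₀ t ε : ℝ} (hε : 0 < ε) {K F : Set X}
    (hF : K ⊆ ⋃ x ∈ F, dynBall T x t₀ ε) :
    genCount T t (2 * ε) K ≤ F.encard * truncCount T t₀ t ε K := by
  obtain ⟨E, hEcard, hE⟩ := exists_encard_eq_truncCount T t₀ t hε K
  let piece (p : X × X) : Set X := dynBall T p.1 t₀ ε ∩ truncBall T t₀ p.2 t ε
  have hcentre : ∀ p : X × X, ∃ c, piece p ⊆ dynBall T c t (2 * ε) := fun p =>
    (piece p).eq_empty_or_nonempty.elim (fun h => ⟨p.1, h ▸ empty_subset _⟩)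
      fun ⟨z, hz⟩ => ⟨z, fun y hy => mem_dynBall_of_mem_dynBall_inter_truncBall T hy hz⟩
  choose c hc using hcentre
  have hcover : K ⊆ ⋃ x ∈ c '' (F ×ˢ E), dynBall T x t (2 * ε) := by
    intro y hy
    obtain ⟨f, hf, hyf⟩ := mem_iUnion₂.1 (hF hy)
    obtain ⟨e, he, hye⟩ := mem_iUnion₂.1 (hE hy)
    exact mem_biUnion (mem_image_of_mem c ⟨hf, he⟩) (hc (f, e) ⟨hyf, hye⟩)
  calc genCount T t (2 * ε) K ≤ (c '' (F ×ˢ E)).encard := genCount_le_encard T hcover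
    _ ≤ (F ×ˢ E).encard := encard_image_le _ _
    _ = F.encard * truncCount T t₀ t ε K := by rw [encard_prod, hEcard]

end Covering

theorem stmt3_general (T : ℝ → X → X)
    (hT : ContinuousOn (fun p : ℝ × X => T p.1 p.2) (Set.Ici 0 ×ˢ Set.univ))
    (K : Set X) (hK : IsCompact K) (t₀ : ℝ) (ht₀ : 0 < t₀) :
    entg T K =
      ⨆ (ε : ℝ) (_ : 0 < ε),
        Filter.limsup
          (fun t : ℝ => ((t⁻¹ : ℝ) : EReal) * ENNReal.log ((truncCount T t₀ t ε K : ℝ≥0∞)))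
          Filter.atTop := by
  change ⨆ (ε : ℝ) (_ : 0 < ε), growthRate (fun t => (genCount T t ε K : ℝ≥0∞)) =
    ⨆ (ε : ℝ) (_ : 0 < ε), growthRate (fun t => (truncCount T t₀ t ε K : ℝ≥0∞))
  refine le_antisymm (iSup₂_le fun ε hε => ?_)
    (iSup₂_mono fun ε _ => growthRate_mono_of_eventually_le <| .of_forall fun t =>
      ENat.toENNReal_le.2 (truncCount_le_genCount T ht₀.le t ε K))
  obtain ⟨F, -, hF⟩ := hK.elim_nhds_subcover (fun x => dynBall T x t₀ (ε / 2))
    fun x _ => dynBall_mem_nhds T hT x (half_pos hε)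
  have hbound (t : ℝ) : (genCount T t ε K : ℝ≥0∞) ≤
      ((F : Set X).encard : ℝ≥0∞) * truncCount T t₀ t (ε / 2) K := by
    rw [← ENat.toENNReal_mul, ENat.toENNReal_le]
    simpa [mul_div_cancel₀] using
      genCount_two_mul_le_encard_mul_truncCount T (half_pos hε) (F := F) hF
  calc growthRate (fun t => (genCount T t ε K : ℝ≥0∞))
      ≤ growthRate (fun t => ((F : Set X).encard : ℝ≥0∞) * truncCount T t₀ t (ε / 2) K) :=
        growthRate_mono_of_eventually_le (.of_forall hbound)
    _ ≤ growthRate (fun t => (truncCount T t₀ t (ε / 2) K : ℝ≥0∞)) :=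
        growthRate_const_mul_le (by simp) _
    _ ≤ _ := le_iSup₂ (f := fun ε' (_ : 0 < ε') =>
        growthRate (fun t => (truncCount T t₀ t ε' K : ℝ≥0∞))) (ε / 2) (half_pos hε)

/-- If `(s,x) ↦ T_s x` is continuous on `[0,∞) × X`, then for every nonempty compact `K`
and `t₀ > 0`, the entropy `g(K)` can be computed with the truncated dynamical balls:
`g(K) = sup_{ε>0} limsup_{t→∞} (1/t) log g_{t₀,t}(ε,K)`. -/
theorem stmt3 (T : ℝ → X → X)
    (hT : ContinuousOn (fun p : ℝ × X => T p.1 p.2) (Set.Ici 0 ×ˢ Set.univ))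
    (K : Set X) (hK : IsCompact K) (hne : K.Nonempty) (t₀ : ℝ) (ht₀ : 0 < t₀) :
    entg T K =
      ⨆ (ε : ℝ) (_ : 0 < ε),
        Filter.limsup
          (fun t : ℝ => ((t⁻¹ : ℝ) : EReal) * ENNReal.log ((truncCount T t₀ t ε K : ℝ≥0∞)))
          Filter.atTop :=
  stmt3_general T hT K hK t₀ ht₀
end

section
/- Let (X,d) be a metric space, m ≥ 1, let z₁,…,z_m ∈ X, let ψ : {z₁,…,z_m} → ℝ, and let K₀ ≥ 0 and K ≥ K₀ be constants with |ψ(z_i) − ψ(z_j)| ≤ K·d(z_i,z_j) for all i,j. Define ψ̃(x) := min_{1≤i≤m} ( ψ(z_i) + K·d(z_i,x) ). Then for every real c ≥ 1 and every K₀-Lipschitz function F : X → ℝ, one has inf_{y∈X} ( c·ψ̃(y) + F(y) ) = min_{1≤i≤m} ( c·ψ(z_i) + F(z_i) ). -/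
/-- Lemma 3.6(2), abstractly: for the extension `ψ̃ x = min_i ( ψ i + K·d(z i, x) )` of a
function `ψ` defined on points `z₁,…,z_m` with Lipschitz constant `K ≥ K₀`, for every `c ≥ 1`
and every `K₀`-Lipschitz `F : X → ℝ` one has
`inf_{y ∈ X} ( c·ψ̃(y) + F(y) ) = min_i ( c·ψ(z i) + F(z i) )`. -/
theorem stmt12 {X : Type*} [MetricSpace X] (m : ℕ) (hm : 1 ≤ m)
    (z : Fin m → X) (ψ : Fin m → ℝ) (K₀ K : ℝ) (hK₀ : 0 ≤ K₀) (hK : K₀ ≤ K)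
    (h : ∀ i j : Fin m, |ψ i - ψ j| ≤ K * dist (z i) (z j))
    (c : ℝ) (hc : 1 ≤ c) (F : X → ℝ)
    (hF : ∀ x x' : X, |F x - F x'| ≤ K₀ * dist x x') :
    sInf (Set.range fun y : X => c * (⨅ i : Fin m, (ψ i + K * dist (z i) y)) + F y) =
      ⨅ i : Fin m, (c * ψ i + F (z i)) := by
  haveI : Nonempty (Fin m) := ⟨⟨0, hm⟩⟩
  have hc0 : (0:ℝ) ≤ c := le_trans zero_le_one hc
  set G : Fin m → ℝ := fun i => c * ψ i + F (z i) with hG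
  have hGbdd : BddBelow (Set.range G) := (Set.finite_range G).bddBelow
  have hlow : ∀ y : X, (⨅ i, G i) ≤ c * (⨅ i : Fin m, (ψ i + K * dist (z i) y)) + F y := by
    intro y
    obtain ⟨i, hi⟩ := exists_eq_ciInf_of_finite (f := fun i : Fin m => ψ i + K * dist (z i) y)
    rw [← hi]
    have h1 : (⨅ j, G j) ≤ G i := ciInf_le hGbdd i
    have h2 : F (z i) - F y ≤ K₀ * dist (z i) y := le_trans (le_abs_self _) (hF (z i) y)
    have hd : (0:ℝ) ≤ dist (z i) y := dist_nonneg
    have hcK : K₀ ≤ c * K := by nlinarith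
    have : G i ≤ c * (ψ i + K * dist (z i) y) + F y := by
      simp only [hG]
      nlinarith [mul_nonneg (sub_nonneg.2 hcK) hd]
    linarith
  have hbdd : BddBelow (Set.range fun y : X =>
      c * (⨅ i : Fin m, (ψ i + K * dist (z i) y)) + F y) :=
    ⟨⨅ i, G i, by rintro _ ⟨y, rfl⟩; exact hlow y⟩
  apply le_antisymm
  · apply le_ciInf
    intro i
    calc sInf (Set.range fun y : X => c * (⨅ i : Fin m, (ψ i + K * dist (z i) y)) + F y)
        ≤ c * (⨅ j : Fin m, (ψ j + K * dist (z j) (z i))) + F (z i) :=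
          csInf_le hbdd ⟨z i, rfl⟩
      _ ≤ G i := by
          have h3 : (⨅ j : Fin m, (ψ j + K * dist (z j) (z i))) ≤ ψ i := by
            have := ciInf_le (f := fun j : Fin m => ψ j + K * dist (z j) (z i))
              (Set.finite_range _).bddBelow i
            simpa using this
          have := mul_le_mul_of_nonneg_left h3 hc0
          simp only [hG]; linarith
  · exact le_csInf ⟨_, ⟨z ⟨0, hm⟩, rfl⟩⟩ (by rintro _ ⟨y, rfl⟩; exact hlow y)
end
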